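/- For real c > 0, h > 0, T > 0 and integers n > m, the contour integral (h/2π) ∫_{-π/h}^{π/h} e^{ik(n-m)h} e^{-W(k)T} dk, where W(k) = c(1 - e^{ikh})/h, equals 0. -/

import Mathlib

/-!
Substituting `θ = k h` turns the integral into `h⁻¹ ∫_{-π}^{π} z ^ (n - m) e^{-(cT/h)(1 - z)} dθ`
with `z = e^{iθ}`, which is `(i h)⁻¹` times the contour integral of
`z ^ (n - m - 1) e^{-(cT/h)(1 - z)}` over the unit circle. For `n > m` this function is entire,
so the integral vanishes by Cauchy's theorem.
-/

open Complex MeasureTheory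

theorem integral_exp_mul_I_mul_comp_exp_mul_I_eq_zero {g : ℂ → ℂ}
    (hg : DiffContOnCl ℂ g (Metric.ball 0 1)) :
    ∫ θ in -Real.pi..Real.pi, exp (θ * I) * g (exp (θ * I)) = 0 := by
  have hcircle : ∮ z in C(0, 1), g z = 0 := hg.circleIntegral_eq_zero zero_le_one
  have hperiodic : Function.Periodic (fun θ : ℝ ↦ circleMap 0 1 θ * g (circleMap 0 1 θ))
      (2 * Real.pi) := (periodic_circleMap 0 1).mul ((periodic_circleMap 0 1).comp g)
  have hshift := hperiodic.intervalIntegral_add_eq (-Real.pi) 0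
  rw [circleIntegral] at hcircle
  simp only [deriv_circleMap, smul_eq_mul, mul_right_comm _ I, intervalIntegral.integral_mul_const,
    mul_eq_zero, I_ne_zero, or_false] at hcircle
  rw [zero_add, hcircle, show -Real.pi + 2 * Real.pi = Real.pi by ring] at hshift
  simpa [circleMap_zero] using hshift

theorem stmt1_general (c h T : ℝ) (hh : 0 < h)
    (n m : ℤ) (hnm : m < n) :
    ((h : ℂ) / (2 * Real.pi)) *
      ∫ k in (-Real.pi / h)..(Real.pi / h),
        Complex.exp (Complex.I * k * ((n : ℂ) - m) * h) *
          Complex.exp (-(c * (1 - Complex.exp (Complex.I * k * h)) / h) * T)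
    = 0 := by
  obtain ⟨N, hN⟩ : ∃ N : ℕ, n - m = N + 1 := ⟨(n - m - 1).toNat, by omega⟩
  set g : ℂ → ℂ := fun z ↦ z ^ N * exp (-(c * (1 - z) / h) * T)
  have hg : Differentiable ℂ g := by fun_prop
  have hintegrand : ∀ k : ℝ, exp (I * k * ((n : ℂ) - m) * h) *
      exp (-(c * (1 - exp (I * k * h)) / h) * T) =
      exp (↑(h * k) * I) * g (exp (↑(h * k) * I)) := by
    intro k
    have hnm' : (n : ℂ) - m = N + 1 := by exact_mod_cast hN
    simp only [g, ← exp_nat_mul, ← mul_assoc, ← exp_add, hnm']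
    push_cast
    ring_nf
  simp_rw [hintegrand]
  rw [intervalIntegral.integral_comp_mul_left (fun θ : ℝ ↦ exp (θ * I) * g (exp (θ * I))) hh.ne',
    mul_div_cancel₀ _ hh.ne', mul_div_cancel₀ _ hh.ne',
    integral_exp_mul_I_mul_comp_exp_mul_I_eq_zero hg.diffContOnCl, smul_zero, mul_zero]

theorem stmt1 (c h T : ℝ) (hc : 0 < c) (hh : 0 < h) (hT : 0 < T)
    (n m : ℤ) (hnm : m < n) :
    ((h : ℂ) / (2 * Real.pi)) *
      ∫ k in (-Real.pi / h)..(Real.pi / h),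
        Complex.exp (Complex.I * k * ((n : ℂ) - m) * h) *
          Complex.exp (-(c * (1 - Complex.exp (Complex.I * k * h)) / h) * T)
    = 0 :=
  stmt1_general c h T hh n m hnm
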